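/- For every set E ⊆ ℝ^n and every 0 < θ < 1, the regularized Assouad spectrum is the running supremum of the (unregularized) Assouad spectrum: dim_{A,reg}^θ(E) = sup_{0 < θ' < θ} dim_A^{θ'}(E). -/

import Mathlib

/-!
For `θ' < θ`, the scales `r = R ^ (1/θ')` are among those allowed in `dim_{A,reg}^θ`, so
`dim_A^θ' ≤ dim_{A,reg}^θ`. Conversely, let `α` exceed the supremum. Finitely many of the spectra
below `θ` already give one constant `C` for which the covering bound at every `γ ∈ [θ², θ]` holds
with an exponent below `α`. Given `r ≤ R ^ (1/θ)`, write `log r / log R = p ^ m` with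
`1/p ∈ [θ², θ]` and chain the `m` covering steps `R → R ^ p → ⋯ → r`. The constant `C ^ m` grows
only polynomially in `log r / log R`, whereas `R / r ≥ 2 ^ (log r / log R - 1)` once `R ≤ 1/2`, so
it is absorbed by an arbitrarily small power of `R / r`. Radii in `(1/2, 1)` are reduced to radius
`1/2` because `ℝⁿ` is doubling.
-/

open Set Metric
open scoped ENNReal

noncomputable section

/-- Covering number: the smallest number of sets of diameter at most `r` needed to
cover `F` (`∞` if no finite such cover exists). -/
def coverN {X : Type*} [PseudoMetricSpace X] (F : Set X) (r : ℝ) : ℝ≥0∞ :=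
  sInf {m : ℝ≥0∞ | ∃ 𝒰 : Finset (Set X), (𝒰.card : ℝ≥0∞) = m ∧
    (∀ U ∈ 𝒰, EMetric.diam U ≤ ENNReal.ofReal r) ∧ F ⊆ ⋃ U ∈ 𝒰, U}

/-- Regularized Assouad spectrum `dim_{A,reg}^θ(F)`. -/
def dimAreg {X : Type*} [PseudoMetricSpace X] (θ : ℝ) (F : Set X) : ℝ :=
  sInf {α : ℝ | 0 < α ∧ ∃ C : ℝ, 0 < C ∧ ∀ x ∈ F, ∀ r R : ℝ,
    0 < r → r ≤ R ^ (1/θ) → R ^ (1/θ) < R → R < 1 →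
    coverN (closedBall x R ∩ F) r ≤ ENNReal.ofReal (C * (R/r) ^ α)}

/-- (Unregularized) Assouad spectrum `dim_A^θ(F)`. -/
def dimAspec {X : Type*} [PseudoMetricSpace X] (θ : ℝ) (F : Set X) : ℝ :=
  sInf {α : ℝ | 0 < α ∧ ∃ C : ℝ, 0 < C ∧ ∀ x ∈ F, ∀ R : ℝ, 0 < R → R < 1 →
    coverN (closedBall x R ∩ F) (R ^ (1/θ)) ≤ ENNReal.ofReal (C * (R / R ^ (1/θ)) ^ α)}

/-- Upper box-counting dimension of a (bounded) set. -/
def dimBupper {X : Type*} [PseudoMetricSpace X] (F : Set X) : ℝ :=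
  sInf {α : ℝ | 0 < α ∧ ∃ C : ℝ, 0 < C ∧ ∀ r : ℝ, 0 < r → r ≤ diam F →
    coverN F r ≤ ENNReal.ofReal (C * r ^ (-α))}

/-- Assouad dimension. -/
def dimA {X : Type*} [PseudoMetricSpace X] (F : Set X) : ℝ :=
  sInf {α : ℝ | 0 < α ∧ ∃ C : ℝ, 0 < C ∧ ∀ x ∈ F, ∀ r R : ℝ, 0 < r → r ≤ R →
    coverN (closedBall x R ∩ F) r ≤ ENNReal.ofReal (C * (R/r) ^ α)}

/-- Quasi-Assouad dimension: `sup_{0<θ<1} dim_{A,reg}^θ(F)`. -/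
def dimqA {X : Type*} [PseudoMetricSpace X] (F : Set X) : ℝ :=
  sSup ((fun θ => dimAreg θ F) '' Ioo (0:ℝ) 1)

open Classical in
/-- Phase-transition parameter `ρ(F)`. -/
def rhoPT {X : Type*} [PseudoMetricSpace X] (F : Set X) : ℝ :=
  if ∃ θ ∈ Ioo (0:ℝ) 1, dimAreg θ F = dimqA F
  then sInf {θ | θ ∈ Ioo (0:ℝ) 1 ∧ dimAreg θ F = dimqA F}
  else 1

/-- The axes-parallel cube `Q(x,R) = ∏ [xᵢ - R, xᵢ + R]`. -/
def cubeQ {n : ℕ} (x : EuclideanSpace ℝ (Fin n)) (R : ℝ) : Set (EuclideanSpace ℝ (Fin n)) :=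
  {y | ∀ i, x i - R ≤ y i ∧ y i ≤ x i + R}

/-- The generation-`m` dyadic subcube of `Q(x,R)` with index `k`. -/
def dyadicCube {n : ℕ} (x : EuclideanSpace ℝ (Fin n)) (R : ℝ) (m : ℕ)
    (k : Fin n → Fin (2 ^ m)) : Set (EuclideanSpace ℝ (Fin n)) :=
  {y | ∀ i, x i - R + (k i : ℝ) * (2 * R / 2 ^ m) ≤ y i ∧
        y i ≤ x i - R + ((k i : ℝ) + 1) * (2 * R / 2 ^ m)}

/-- `N_d(B(x,R) ∩ F, m)`: the number of generation-`m` dyadic subcubes of `Q(x,R)`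
that intersect `B(x,R) ∩ F`. -/
def Nd {n : ℕ} (x : EuclideanSpace ℝ (Fin n)) (R : ℝ)
    (F : Set (EuclideanSpace ℝ (Fin n))) (m : ℕ) : ℕ :=
  Nat.card {k : Fin n → Fin (2 ^ m) // (dyadicCube x R m k ∩ (closedBall x R ∩ F)).Nonempty}

/-- `f` is `η`-quasisymmetric on the set `S`. -/
def QSOn {X Y : Type*} [PseudoMetricSpace X] [PseudoMetricSpace Y]
    (η : ℝ → ℝ) (f : X → Y) (S : Set X) : Prop :=
  ∀ x ∈ S, ∀ y ∈ S, ∀ z ∈ S, x ≠ z →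
    dist (f x) (f y) ≤ η (dist x y / dist x z) * dist (f x) (f z)

/-- Distance between two sets. -/
def setDist {X : Type*} [PseudoMetricSpace X] (A B : Set X) : ℝ :=
  sInf {d : ℝ | ∃ a ∈ A, ∃ b ∈ B, d = dist a b}

end

section CoveringNumber

variable {X : Type*} [PseudoMetricSpace X] {F G : Set X} {r t : ℝ}

lemma coverN_le_card (𝒰 : Finset (Set X)) (hdiam : ∀ U ∈ 𝒰, ediam U ≤ ENNReal.ofReal r)
    (hcov : F ⊆ ⋃ U ∈ 𝒰, U) : coverN F r ≤ 𝒰.card :=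
  sInf_le ⟨𝒰, rfl, hdiam, hcov⟩

lemma coverN_mono (h : F ⊆ G) : coverN F r ≤ coverN G r :=
  sInf_le_sInf fun _ ⟨𝒰, h𝒰, hdiam, hcov⟩ => ⟨𝒰, h𝒰, hdiam, h.trans hcov⟩

lemma coverN_anti (h : r ≤ t) : coverN F t ≤ coverN F r :=
  sInf_le_sInf fun _ ⟨𝒰, h𝒰, hdiam, hcov⟩ =>
    ⟨𝒰, h𝒰, fun U hU => (hdiam U hU).trans (ENNReal.ofReal_le_ofReal h), hcov⟩

lemma exists_finset_card_eq_coverN (h : coverN F r ≠ ⊤) :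
    ∃ 𝒰 : Finset (Set X), (𝒰.card : ℝ≥0∞) = coverN F r ∧
      (∀ U ∈ 𝒰, ediam U ≤ ENNReal.ofReal r) ∧ F ⊆ ⋃ U ∈ 𝒰, U := by
  classical
  have hex : ∃ k : ℕ, ∃ 𝒰 : Finset (Set X), 𝒰.card = k ∧
      (∀ U ∈ 𝒰, ediam U ≤ ENNReal.ofReal r) ∧ F ⊆ ⋃ U ∈ 𝒰, U := by
    obtain ⟨_, ⟨𝒰, rfl, hdiam, hcov⟩, -⟩ := sInf_lt_iff.mp h.lt_top
    exact ⟨_, 𝒰, rfl, hdiam, hcov⟩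
  obtain ⟨𝒰, hcard, hdiam, hcov⟩ := Nat.find_spec hex
  refine ⟨𝒰, le_antisymm (le_sInf ?_) (coverN_le_card 𝒰 hdiam hcov), hdiam, hcov⟩
  rintro _ ⟨𝒱, rfl, hdiam', hcov'⟩
  rw [hcard]
  exact_mod_cast Nat.find_min' hex ⟨𝒱, rfl, hdiam', hcov'⟩

lemma coverN_le_mul (hGF : G ⊆ F) (ht : 0 ≤ t) {a b : ℝ≥0∞} (ha : a ≠ ⊤) (hb : b ≠ ⊤)
    (h₁ : coverN G t ≤ a) (h₂ : ∀ y ∈ F, coverN (closedBall y t ∩ F) r ≤ b) :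
    coverN G r ≤ a * b := by
  classical
  obtain ⟨𝒰, hcard, hdiam, hcov⟩ := exists_finset_card_eq_coverN (ne_top_of_le_ne_top ha h₁)
  have hpiece : ∀ U ∈ 𝒰, ∃ 𝒱 : Finset (Set X), (𝒱.card : ℝ≥0∞) ≤ b ∧
      (∀ V ∈ 𝒱, ediam V ≤ ENNReal.ofReal r) ∧ U ∩ G ⊆ ⋃ V ∈ 𝒱, V := by
    intro U hU
    rcases (U ∩ G).eq_empty_or_nonempty with hempty | ⟨y, hyU, hyG⟩
    · exact ⟨∅, by simp, by simp, by simp [hempty]⟩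
    have hsub : U ∩ G ⊆ closedBall y t ∩ F := fun z ⟨hzU, hzG⟩ =>
      ⟨(edist_le_ofReal ht).mp ((edist_le_ediam_of_mem hzU hyU).trans (hdiam U hU)),
        hGF hzG⟩
    have hle := (coverN_mono hsub).trans (h₂ y (hGF hyG))
    obtain ⟨𝒱, h𝒱, hdiam𝒱, hcov𝒱⟩ := exists_finset_card_eq_coverN (ne_top_of_le_ne_top hb hle)
    exact ⟨𝒱, h𝒱 ▸ hle, hdiam𝒱, hcov𝒱⟩
  choose! 𝒱 h𝒱card h𝒱diam h𝒱cov using hpiece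
  have hcovG : G ⊆ ⋃ V ∈ 𝒰.biUnion 𝒱, V := by
    intro z hz
    obtain ⟨U, hU, hzU⟩ := mem_iUnion₂.mp (hcov hz)
    obtain ⟨V, hV, hzV⟩ := mem_iUnion₂.mp (h𝒱cov U hU ⟨hzU, hz⟩)
    exact mem_iUnion₂.mpr ⟨V, Finset.mem_biUnion.mpr ⟨U, hU, hV⟩, hzV⟩
  have hdiamG : ∀ V ∈ 𝒰.biUnion 𝒱, ediam V ≤ ENNReal.ofReal r := by
    intro V hV
    obtain ⟨U, hU, hV⟩ := Finset.mem_biUnion.mp hV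
    exact h𝒱diam U hU V hV
  calc coverN G r ≤ (𝒰.biUnion 𝒱).card := coverN_le_card _ hdiamG hcovG
    _ ≤ ∑ U ∈ 𝒰, ((𝒱 U).card : ℝ≥0∞) := by exact_mod_cast Finset.card_biUnion_le
    _ ≤ ∑ _U ∈ 𝒰, b := Finset.sum_le_sum h𝒱card
    _ = 𝒰.card * b := by rw [Finset.sum_const, nsmul_eq_mul]
    _ ≤ a * b := by rw [hcard]; exact mul_le_mul_left h₁ b

end CoveringNumber

section Euclidean

variable {n : ℕ}

lemma dist_le_of_forall_abs_sub_le {z w : EuclideanSpace ℝ (Fin n)} {s : ℝ} (hs : 0 ≤ s)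
    (h : ∀ i, |z i - w i| ≤ s) : dist z w ≤ (n + 1) * s := by
  rw [EuclideanSpace.dist_eq, Real.sqrt_le_left (by positivity)]
  calc ∑ i, dist (z i) (w i) ^ 2 ≤ ∑ _i : Fin n, s ^ 2 :=
        Finset.sum_le_sum fun i _ => by
          rw [Real.dist_eq]; exact pow_le_pow_left₀ (abs_nonneg _) (h i) 2
    _ = n * s ^ 2 := by simp
    _ ≤ ((n + 1) * s) ^ 2 := by nlinarith [sq_nonneg s, sq_nonneg (n * s)]

/-- Grid cubes of side `r / (n + 1)` have diameter at most `r`, and `⌊2 (n + 1) R / r⌋ + 1` of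
them per axis cover the ball. -/
lemma coverN_closedBall_le (x : EuclideanSpace ℝ (Fin n)) {r R : ℝ} (hr : 0 < r) (hrR : r ≤ R) :
    coverN (closedBall x R) r ≤ ENNReal.ofReal ((3 * (n + 1)) ^ n * (R / r) ^ n) := by
  classical
  have hR0 : 0 < R := hr.trans_le hrR
  set s : ℝ := r / (n + 1) with hs
  have hs0 : 0 < s := by positivity
  set m : ℕ := ⌊2 * R / s⌋₊ + 1
  let cell : (Fin n → Fin m) → Set (EuclideanSpace ℝ (Fin n)) := fun k =>
    {z | ∀ i, x i - R + k i * s ≤ z i ∧ z i ≤ x i - R + (k i + 1) * s}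
  have hdiam : ∀ U ∈ Finset.univ.image cell, ediam U ≤ ENNReal.ofReal r := by
    simp only [Finset.mem_image, Finset.mem_univ, true_and, forall_exists_index,
      forall_apply_eq_imp_iff]
    intro k
    refine ediam_le fun z hz w hw => (edist_le_ofReal hr.le).mpr ?_
    calc dist z w ≤ (n + 1) * s := dist_le_of_forall_abs_sub_le hs0.le fun i => by
          rw [abs_le]; constructor <;> linarith [hz i, hw i]
      _ = r := by rw [hs]; field_simp
  have hcov : closedBall x R ⊆ ⋃ U ∈ Finset.univ.image cell, U := by
    intro y hy
    have hcoord : ∀ i, 0 ≤ y i - x i + R ∧ y i - x i + R ≤ 2 * R := fun i => by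
      have := (PiLp.dist_apply_le y x i).trans (mem_closedBall.mp hy)
      rw [Real.dist_eq, abs_le] at this
      constructor <;> linarith
    have hlt : ∀ i, ⌊(y i - x i + R) / s⌋₊ < m := fun i =>
      Nat.lt_succ_of_le (Nat.floor_mono (div_le_div_of_nonneg_right (hcoord i).2 hs0.le))
    refine mem_iUnion₂.mpr ⟨cell fun i => ⟨_, hlt i⟩,
      Finset.mem_image_of_mem _ (Finset.mem_univ _), fun i => ?_⟩
    have hfloor := Nat.floor_le (div_nonneg (hcoord i).1 hs0.le)
    have hceil := Nat.lt_floor_add_one ((y i - x i + R) / s)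
    rw [le_div_iff₀ hs0] at hfloor
    rw [div_lt_iff₀ hs0] at hceil
    constructor <;> simp only <;> linarith
  have hm : (m : ℝ) ≤ 3 * (n + 1) * (R / r) := by
    have h1 : (⌊2 * R / s⌋₊ : ℝ) ≤ 2 * R / s := Nat.floor_le (by positivity)
    have h2 : 2 * R / s = 2 * (n + 1) * (R / r) := by rw [hs]; field_simp
    have h3 : (1 : ℝ) ≤ (n + 1) * (R / r) :=
      one_le_mul_of_one_le_of_one_le (by linarith [n.cast_nonneg (α := ℝ)])
        ((one_le_div hr).mpr hrR)
    push_cast [m]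
    linarith
  calc coverN (closedBall x R) r ≤ (Finset.univ.image cell).card := coverN_le_card _ hdiam hcov
    _ ≤ ((m ^ n : ℕ) : ℝ≥0∞) := by
        exact_mod_cast Finset.card_image_le.trans (by simp)
    _ ≤ ENNReal.ofReal ((3 * (n + 1)) ^ n * (R / r) ^ n) := by
        rw [← ENNReal.ofReal_natCast, ← mul_pow]
        exact ENNReal.ofReal_le_ofReal (by push_cast; gcongr)

end Euclidean

lemma exists_pow_eq_of_le {q X : ℝ} (hq : 1 < q) (hqX : q ≤ X) :
    ∃ m : ℕ, ∃ p : ℝ, q ≤ p ∧ p ≤ q ^ 2 ∧ p ^ (m + 1) = X ∧ q ^ (m + 1) ≤ X := by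
  obtain ⟨j, hj, hj'⟩ := exists_nat_pow_near (hq.le.trans hqX) hq
  obtain ⟨m, rfl⟩ : ∃ m, j = m + 1 := Nat.exists_eq_add_one.mpr <| Nat.pos_of_ne_zero fun h0 => by
    subst h0; simp only [zero_add, pow_one] at hj'; linarith
  have hX0 : 0 ≤ X := by linarith
  set p := X ^ ((m + 1 : ℕ)⁻¹ : ℝ)
  have hp : p ^ (m + 1) = X := Real.rpow_inv_natCast_pow hX0 m.succ_ne_zero
  have hp0 : 0 ≤ p := by positivity
  refine ⟨m, p, ?_, ?_, hp, hj⟩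
  · exact (pow_le_pow_iff_left₀ (by linarith) hp0 m.succ_ne_zero).mp (hp ▸ hj)
  · refine (pow_le_pow_iff_left₀ hp0 (by positivity) m.succ_ne_zero).mp ?_
    rw [hp, ← pow_mul]
    exact hj'.le.trans (pow_le_pow_right₀ hq.le (by omega))

lemma exists_pow_le_mul_exp {C q a : ℝ} (hC : 1 ≤ C) (hq : 1 < q) (ha : 0 < a) :
    ∃ K, 0 < K ∧ ∀ (m : ℕ) (X : ℝ), q ^ m ≤ X → C ^ m ≤ K * Real.exp (a * X) := by
  have hlogq : 0 < Real.log q := Real.log_pos hq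
  set c := Real.log C / Real.log q
  have hc : 0 ≤ c := div_nonneg (Real.log_nonneg hC) hlogq.le
  refine ⟨Real.exp (c ^ 2 / a), Real.exp_pos _, fun m X hX => ?_⟩
  have hX0 : 0 < X := (pow_pos (by linarith) m).trans_le hX
  have hm : m * Real.log q ≤ Real.log X := by
    rw [← Real.log_pow]; exact Real.log_le_log (by positivity) hX
  have hlog : Real.log X ≤ 2 * √X := by
    have := Real.log_le_rpow_div hX0.le (by norm_num : (0 : ℝ) < 1/2)
    rw [← Real.sqrt_eq_rpow] at this
    linarith
  have hamgm : c * (2 * √X) ≤ c ^ 2 / a + a * X := by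
    rw [div_add' _ _ _ ha.ne', le_div_iff₀ ha]
    have hsq : a * X * a = (a * √X) ^ 2 := by rw [mul_pow, Real.sq_sqrt hX0.le]; ring
    rw [hsq]
    nlinarith [sq_nonneg (c - a * √X)]
  have hexp : m * Real.log C ≤ c ^ 2 / a + a * X :=
    calc m * Real.log C = c * (m * Real.log q) := by simp only [c]; field_simp
      _ ≤ c * (2 * √X) := mul_le_mul_of_nonneg_left (hm.trans hlog) hc
      _ ≤ c ^ 2 / a + a * X := hamgm
  calc C ^ m = Real.exp (m * Real.log C) := by
        rw [Real.exp_nat_mul, Real.exp_log (by linarith)]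
    _ ≤ Real.exp (c ^ 2 / a + a * X) := Real.exp_le_exp.mpr hexp
    _ = Real.exp (c ^ 2 / a) * Real.exp (a * X) := Real.exp_add _ _

section Spectrum

variable {X : Type*} [PseudoMetricSpace X] {F : Set X} {θ γ α β C C' : ℝ}

/-- The conditions in the definitions of `dimAspec` and `dimAreg`, for exponent `α` and
constant `C`. -/
def HasSpecBound (θ : ℝ) (F : Set X) (α C : ℝ) : Prop :=
  ∀ x ∈ F, ∀ R : ℝ, 0 < R → R < 1 →
    coverN (closedBall x R ∩ F) (R ^ (1/θ)) ≤ ENNReal.ofReal (C * (R / R ^ (1/θ)) ^ α)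

def HasRegSpecBound (θ : ℝ) (F : Set X) (α C : ℝ) : Prop :=
  ∀ x ∈ F, ∀ r R : ℝ, 0 < r → r ≤ R ^ (1/θ) → R ^ (1/θ) < R → R < 1 →
    coverN (closedBall x R ∩ F) r ≤ ENNReal.ofReal (C * (R / r) ^ α)

lemma dimAspec_nonneg : 0 ≤ dimAspec θ F :=
  Real.sInf_nonneg fun _ hα => hα.1.le

lemma dimAreg_le_of_hasRegSpecBound (hα : 0 < α) (hC : 0 < C) (h : HasRegSpecBound θ F α C) :
    dimAreg θ F ≤ α :=
  csInf_le ⟨0, fun _ hα => hα.1.le⟩ ⟨hα, C, hC, h⟩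

lemma HasRegSpecBound.hasSpecBound (h : HasRegSpecBound θ F α C) (hγ : 0 < γ) (hγθ : γ ≤ θ)
    (hθ : θ < 1) : HasSpecBound γ F α C := by
  intro x hx R hR0 hR1
  have hθ0 : 0 < θ := hγ.trans_le hγθ
  refine h x hx _ R (by positivity) ?_ ?_ hR1
  · exact Real.rpow_le_rpow_of_exponent_ge hR0 hR1.le (one_div_le_one_div_of_le hγ hγθ)
  · simpa using Real.rpow_lt_rpow_of_exponent_gt hR0 hR1 (one_lt_one_div hθ0 hθ)

lemma dimAspec_le_dimAreg (hne : ∃ α C, 0 < α ∧ 0 < C ∧ HasRegSpecBound θ F α C) (hγ : 0 < γ)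
    (hγθ : γ ≤ θ) (hθ : θ < 1) : dimAspec γ F ≤ dimAreg θ F := by
  obtain ⟨α, C, hα, hC, h⟩ := hne
  exact csInf_le_csInf ⟨0, fun _ hα => hα.1.le⟩ ⟨α, hα, C, hC, h⟩
    fun _ ⟨hα, C, hC, h⟩ => ⟨hα, C, hC, HasRegSpecBound.hasSpecBound h hγ hγθ hθ⟩

lemma HasSpecBound.mono (h : HasSpecBound θ F β C) (hθ : 0 < θ) (hθγ : θ ≤ γ)
    (hexp : (1/θ - 1) * β ≤ (1/γ - 1) * α) (hC : 0 ≤ C) (hCC' : C ≤ C') :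
    HasSpecBound γ F α C' := by
  intro x hx R hR0 hR1
  have hscale : R ^ (1/θ) ≤ R ^ (1/γ) :=
    Real.rpow_le_rpow_of_exponent_ge hR0 hR1.le (one_div_le_one_div_of_le hθ hθγ)
  refine (coverN_anti hscale).trans ((h x hx R hR0 hR1).trans (ENNReal.ofReal_le_ofReal ?_))
  have hratio : ∀ p : ℝ, R / R ^ p = R ^ (1 - p) := fun p => by
    rw [Real.rpow_sub hR0, Real.rpow_one]
  rw [hratio, hratio, ← Real.rpow_mul hR0.le, ← Real.rpow_mul hR0.le]
  exact mul_le_mul hCC'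
    (Real.rpow_le_rpow_of_exponent_ge hR0 hR1.le (by linarith)) (by positivity) (hC.trans hCC')

lemma exists_hasSpecBound_of_dimAspec_lt (hθ0 : 0 < θ) (hθ1 : θ ≤ 1)
    (hne : ∃ β C, 0 < β ∧ 0 < C ∧ HasSpecBound θ F β C) (h : dimAspec θ F < α) :
    ∃ C, 0 < C ∧ HasSpecBound θ F α C := by
  obtain ⟨β₀, C₀, hβ₀, hC₀, h₀⟩ := hne
  have hne' : {β | 0 < β ∧ ∃ C, 0 < C ∧ HasSpecBound θ F β C}.Nonempty :=
    ⟨β₀, hβ₀, C₀, hC₀, h₀⟩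
  obtain ⟨β, ⟨-, C, hC, hβ⟩, hβα⟩ := exists_lt_of_csInf_lt hne' h
  have hθinv : 0 ≤ 1/θ - 1 := by linarith [one_le_one_div hθ0 hθ1]
  exact ⟨C, hC, hβ.mono hθ0 le_rfl (mul_le_mul_of_nonneg_left hβα.le hθinv) hC.le le_rfl⟩

/-- The `θᵢ` are chosen so that the numbers `1/θᵢ - 1` form a geometric progression of ratio
`α / β`; finitely many of them reach past `1/θ² - 1`. -/
lemma exists_uniform_hasSpecBound (hθ0 : 0 < θ) (hθ1 : θ < 1) (hβ : 0 < β) (hβα : β < α)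
    (h : ∀ θ', 0 < θ' → θ' < θ → ∃ C, 0 < C ∧ HasSpecBound θ' F β C) :
    ∃ C, 1 ≤ C ∧ ∀ γ, θ ^ 2 ≤ γ → γ ≤ θ → HasSpecBound γ F α C := by
  set u₀ : ℝ := 1/θ - 1
  set ρ : ℝ := α / β
  have hu₀ : 0 < u₀ := by linarith [one_lt_one_div hθ0 hθ1]
  have hρ : 1 < ρ := (one_lt_div hβ).mpr hβα
  have hρβ : ρ * β = α := div_mul_cancel₀ α hβ.ne'
  set θ' : ℕ → ℝ := fun i => 1 / (1 + u₀ * ρ ^ (i + 1))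
  have hθ'inv : ∀ i, 1 / θ' i - 1 = u₀ * ρ ^ (i + 1) := fun i => by simp [θ']
  have hθ'0 : ∀ i, 0 < θ' i := fun i => by positivity
  have hθ'θ : ∀ i, θ' i < θ := fun i => by
    have : u₀ < u₀ * ρ ^ (i + 1) := lt_mul_of_one_lt_right hu₀ (one_lt_pow₀ hρ (by omega))
    rw [← one_div_one_div θ]
    exact one_div_lt_one_div_of_lt (by positivity) (by linarith [hθ'inv i])
  choose C hC hbound using fun i => h (θ' i) (hθ'0 i) (hθ'θ i)
  obtain ⟨N, hN⟩ := pow_unbounded_of_one_lt ((1/θ ^ 2 - 1) / u₀) hρ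
  obtain ⟨K, hK⟩ := ((Finset.range N).image C).bddAbove
  refine ⟨max K 1, le_max_right _ _, fun γ hγθ2 hγθ => ?_⟩
  have hγ0 : 0 < γ := (by positivity : 0 < θ ^ 2).trans_le hγθ2
  set u : ℝ := 1/γ - 1
  have hu₀u : u₀ ≤ u := by simp only [u₀, u]; linarith [one_div_le_one_div_of_le hγ0 hγθ]
  have huθ2 : u ≤ 1/θ ^ 2 - 1 := by
    simp only [u]; linarith [one_div_le_one_div_of_le (by positivity : 0 < θ ^ 2) hγθ2]
  obtain ⟨i, hi, hi'⟩ := exists_nat_pow_near ((one_le_div hu₀).mpr hu₀u) hρ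
  have hiN : i < N := (pow_lt_pow_iff_right₀ hρ).mp
    ((hi.trans (div_le_div_of_nonneg_right huθ2 hu₀.le)).trans_lt hN)
  rw [le_div_iff₀ hu₀] at hi
  rw [div_lt_iff₀ hu₀] at hi'
  have hθ'γ : θ' i ≤ γ :=
    ((one_div_lt_one_div hγ0 (hθ'0 i)).mp (by linarith [hθ'inv i, mul_comm u₀ (ρ ^ (i + 1))])).le
  have hexp : (1 / θ' i - 1) * β ≤ u * α := by
    rw [hθ'inv, pow_succ]
    calc u₀ * (ρ ^ i * ρ) * β = ρ ^ i * u₀ * (ρ * β) := by ring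
      _ ≤ u * α := by rw [hρβ]; exact mul_le_mul_of_nonneg_right hi (by linarith)
  have hCK : C i ≤ K := hK (Finset.mem_image_of_mem C (Finset.mem_range.mpr hiN))
  exact (hbound i).mono (hθ'0 i) hθ'γ hexp (hC i).le (hCK.trans (le_max_left _ _))

lemma HasSpecBound.iterate (h : HasSpecBound γ F α C) (hγ : 0 < γ) (hC : 0 ≤ C) (k : ℕ) :
    ∀ x ∈ F, ∀ R : ℝ, 0 < R → R < 1 →
      coverN (closedBall x R ∩ F) (R ^ ((1/γ) ^ (k + 1))) ≤
        ENNReal.ofReal (C ^ (k + 1) * (R / R ^ ((1/γ) ^ (k + 1))) ^ α) := by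
  induction k with
  | zero =>
    intro x hx R hR0 hR1
    simpa only [zero_add, pow_one] using h x hx R hR0 hR1
  | succ k ih =>
    intro x hx R hR0 hR1
    set t := R ^ ((1/γ) ^ (k + 1))
    have ht0 : 0 < t := by positivity
    have ht1 : t < 1 := Real.rpow_lt_one hR0.le hR1 (by positivity)
    have hnext : t ^ (1/γ) = R ^ ((1/γ) ^ (k + 1 + 1)) := by
      rw [← Real.rpow_mul hR0.le, ← pow_succ]
    rw [← hnext]
    refine (coverN_le_mul inter_subset_right ht0.le ENNReal.ofReal_ne_top ENNReal.ofReal_ne_top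
      (ih x hx R hR0 hR1) fun y hy => h y hy t ht0 ht1).trans ?_
    rw [← ENNReal.ofReal_mul (by positivity)]
    refine le_of_eq (congrArg ENNReal.ofReal ?_)
    have hratio : (R / t) ^ α * (t / t ^ (1/γ)) ^ α = (R / t ^ (1/γ)) ^ α := by
      rw [← Real.mul_rpow (by positivity) (by positivity), div_mul_div_cancel₀ ht0.ne']
    rw [← hratio]
    ring

/-- With `r = R ^ Y`, write `Y = p ^ (m + 1)` with `1/p ∈ [θ², θ]` and pass from `R` to `r`
through the scales `R ^ (p ^ k)`. -/
lemma exists_small_radii_bound_of_uniform {ε : ℝ} (hθ0 : 0 < θ) (hθ1 : θ < 1) (hε : 0 < ε)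
    (hC : 1 ≤ C) (h : ∀ γ, θ ^ 2 ≤ γ → γ ≤ θ → HasSpecBound γ F α C) :
    ∃ K, 0 < K ∧ ∀ x ∈ F, ∀ r R : ℝ, 0 < r → r ≤ R ^ (1/θ) → 0 < R → R ≤ 1/2 →
      coverN (closedBall x R ∩ F) r ≤ ENNReal.ofReal (K * (R / r) ^ (α + ε)) := by
  have hq : 1 < 1/θ := one_lt_one_div hθ0 hθ1
  have hlog2 : 0 < Real.log 2 := Real.log_pos one_lt_two
  obtain ⟨K, hK, habsorb⟩ := exists_pow_le_mul_exp hC hq (mul_pos hε hlog2)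
  refine ⟨K * 2 ^ ε, by positivity, fun x hx r R hr hrR hR0 hR => ?_⟩
  have hR1 : R < 1 := by linarith
  have hlogR : Real.log R < 0 := Real.log_neg hR0 hR1
  set Y := Real.log r / Real.log R
  have hrY : R ^ Y = r := by
    rw [Real.rpow_def_of_pos hR0, mul_div_cancel₀ _ hlogR.ne, Real.exp_log hr]
  have hqY : 1/θ ≤ Y := by
    rw [le_div_iff_of_neg hlogR, ← Real.log_rpow hR0]
    exact Real.log_le_log hr hrR
  obtain ⟨m, p, hqp, hpq, hpY, hqmY⟩ := exists_pow_eq_of_le hq hqY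
  have hp0 : 0 < p := by linarith
  have hγ : θ ^ 2 ≤ 1/p ∧ 1/p ≤ θ := by
    constructor
    · simpa [div_pow] using one_div_le_one_div_of_le hp0 hpq
    · simpa using one_div_le_one_div_of_le (by positivity) hqp
  have hiter := (h (1/p) hγ.1 hγ.2).iterate (by positivity) (by linarith) m x hx R hR0 hR1
  rw [one_div_one_div, hpY, hrY] at hiter
  refine hiter.trans (ENNReal.ofReal_le_ofReal ?_)
  have hRr : 0 < R / r := by positivity
  have hgrowth : Real.exp (ε * Real.log 2 * Y) ≤ 2 ^ ε * (R / r) ^ ε := by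
    have hlogRr : Real.log (R / r) = (Y - 1) * -Real.log R := by
      rw [Real.log_div hR0.ne' hr.ne', ← hrY, Real.log_rpow hR0]; ring
    have hlogR2 : Real.log 2 ≤ -Real.log R := by
      have := Real.log_le_log hR0 hR
      rw [one_div, Real.log_inv] at this
      linarith
    have hY1 : 0 ≤ Y - 1 := by linarith
    rw [Real.rpow_def_of_pos two_pos, Real.rpow_def_of_pos hRr, ← Real.exp_add, hlogRr]
    exact Real.exp_le_exp.mpr (by nlinarith [mul_le_mul_of_nonneg_left hlogR2 hY1])
  calc C ^ (m + 1) * (R / r) ^ α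
      ≤ K * Real.exp (ε * Real.log 2 * Y) * (R / r) ^ α := by
        gcongr; exact habsorb _ _ hqmY
    _ ≤ K * (2 ^ ε * (R / r) ^ ε) * (R / r) ^ α := by gcongr
    _ = K * 2 ^ ε * (R / r) ^ (α + ε) := by rw [Real.rpow_add hRr]; ring

end Spectrum

section EuclideanSpectrum

variable {n : ℕ} {E : Set (EuclideanSpace ℝ (Fin n))} {θ α K : ℝ}

lemma hasRegSpecBound_euclidean (E : Set (EuclideanSpace ℝ (Fin n))) (θ : ℝ) :
    HasRegSpecBound θ E (n + 1) ((3 * (n + 1)) ^ n) := by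
  intro x _ r R hr hrR hRR _
  have hrR' : r ≤ R := hrR.trans hRR.le
  calc coverN (closedBall x R ∩ E) r ≤ coverN (closedBall x R) r := coverN_mono inter_subset_left
    _ ≤ ENNReal.ofReal ((3 * (n + 1)) ^ n * (R / r) ^ n) := coverN_closedBall_le x hr hrR'
    _ ≤ ENNReal.ofReal ((3 * (n + 1)) ^ n * (R / r) ^ ((n : ℝ) + 1)) := by
        gcongr
        rw [← Real.rpow_natCast]
        exact Real.rpow_le_rpow_of_exponent_le ((one_le_div hr).mpr hrR') (by linarith)

lemma exists_hasRegSpecBound_of_small_radii (hθ0 : 0 < θ) (hθ1 : θ < 1) (hα : 0 ≤ α) (hK : 0 < K)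
    (h : ∀ x ∈ E, ∀ r R : ℝ, 0 < r → r ≤ R ^ (1/θ) → 0 < R → R ≤ 1/2 →
      coverN (closedBall x R ∩ E) r ≤ ENNReal.ofReal (K * (R / r) ^ α)) :
    ∃ C, 0 < C ∧ HasRegSpecBound θ E α C := by
  set ρ : ℝ := (1/2) ^ (1/θ)
  have hρ0 : 0 < ρ := by positivity
  have hρ : ρ ≤ 1/2 := by
    calc ρ ≤ (1/2) ^ (1 : ℝ) := Real.rpow_le_rpow_of_exponent_ge (by norm_num) (by norm_num)
          (one_lt_one_div hθ0 hθ1).le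
      _ = 1/2 := Real.rpow_one _
  set D : ℝ := (1/2) / ρ
  have hD : 1 ≤ D := (one_le_div hρ0).mpr hρ
  set CE : ℝ := (3 * (n + 1)) ^ n
  refine ⟨max K (CE * 2 ^ n * (K * D ^ α)), lt_max_of_lt_left hK,
    fun x hx r R hr hrR hRR hR1 => ?_⟩
  have hR0 : 0 < R := hr.trans_le (hrR.trans hRR.le)
  have hRr : 1 ≤ R / r := (one_le_div hr).mpr (hrR.trans hRR.le)
  rcases le_or_gt R (1/2) with hR | hR
  · exact (h x hx r R hr hrR hR0 hR).trans
      (ENNReal.ofReal_le_ofReal (by gcongr; exact le_max_left _ _))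
  have houter : coverN (closedBall x R ∩ E) (1/2) ≤ ENNReal.ofReal (CE * 2 ^ n) :=
    (coverN_mono inter_subset_left).trans ((coverN_closedBall_le x (by norm_num) hR.le).trans
      (ENNReal.ofReal_le_ofReal (by gcongr; linarith)))
  have hinner : ∀ y ∈ E, coverN (closedBall y (1/2) ∩ E) r ≤
      ENNReal.ofReal (K * D ^ α * (R / r) ^ α) := by
    intro y hy
    have hscale : (1/2) / min r ρ ≤ D * (R / r) := by
      rcases le_total r ρ with hrρ | hρr
      · rw [min_eq_left hrρ]
        calc (1/2) / r ≤ R / r := by gcongr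
          _ ≤ D * (R / r) := le_mul_of_one_le_left (by linarith) hD
      · rw [min_eq_right hρr]; exact le_mul_of_one_le_right (by linarith) hRr
    calc coverN (closedBall y (1/2) ∩ E) r ≤ coverN (closedBall y (1/2) ∩ E) (min r ρ) :=
          coverN_anti (min_le_left _ _)
      _ ≤ ENNReal.ofReal (K * ((1/2) / min r ρ) ^ α) :=
          h y hy _ _ (lt_min hr hρ0) (min_le_right _ _) (by norm_num) le_rfl
      _ ≤ ENNReal.ofReal (K * D ^ α * (R / r) ^ α) := by
          rw [mul_assoc, ← Real.mul_rpow (by linarith) (by linarith)]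
          gcongr
  refine (coverN_le_mul inter_subset_right (by norm_num) ENNReal.ofReal_ne_top
    ENNReal.ofReal_ne_top houter hinner).trans ?_
  rw [← ENNReal.ofReal_mul (by positivity)]
  refine ENNReal.ofReal_le_ofReal ?_
  calc CE * 2 ^ n * (K * D ^ α * (R / r) ^ α) = CE * 2 ^ n * (K * D ^ α) * (R / r) ^ α := by ring
    _ ≤ _ := by gcongr; exact le_max_right _ _

lemma dimAreg_le_of_forall_dimAspec_le {s : ℝ} (hθ0 : 0 < θ) (hθ1 : θ < 1)
    (hs : ∀ θ', 0 < θ' → θ' < θ → dimAspec θ' E ≤ s) : dimAreg θ E ≤ s := by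
  have hs0 : 0 ≤ s := dimAspec_nonneg.trans (hs (θ/2) (by linarith) (by linarith))
  refine le_of_forall_gt_imp_ge_of_dense fun α hα => ?_
  obtain ⟨β, hsβ, hβα⟩ := exists_between hα
  obtain ⟨β', hββ', hβ'α⟩ := exists_between hβα
  have hspec : ∀ θ', 0 < θ' → θ' < θ → ∃ C, 0 < C ∧ HasSpecBound θ' E β C := fun θ' h0 h1 =>
    exists_hasSpecBound_of_dimAspec_lt h0 (by linarith)
      ⟨n + 1, _, by positivity, by positivity,
        (hasRegSpecBound_euclidean E θ).hasSpecBound h0 h1.le hθ1⟩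
      ((hs θ' h0 h1).trans_lt (by linarith))
  obtain ⟨CU, hCU, hunif⟩ := exists_uniform_hasSpecBound hθ0 hθ1 (by linarith) (by linarith) hspec
  obtain ⟨K, hK, hsmall⟩ :=
    exists_small_radii_bound_of_uniform hθ0 hθ1 (by linarith : 0 < α - β') hCU hunif
  simp only [add_sub_cancel] at hsmall
  obtain ⟨C, hC, hreg⟩ := exists_hasRegSpecBound_of_small_radii hθ0 hθ1 (by linarith) hK hsmall
  exact dimAreg_le_of_hasRegSpecBound (by linarith) hC hreg

end EuclideanSpectrum

/-- the regularized Assouad spectrum is the running supremum of the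
(unregularized) Assouad spectrum. -/
theorem stmt14 {n : ℕ} (E : Set (EuclideanSpace ℝ (Fin n))) (θ : ℝ)
    (hθ0 : 0 < θ) (hθ1 : θ < 1) :
    dimAreg θ E = sSup {d : ℝ | ∃ θ' : ℝ, 0 < θ' ∧ θ' < θ ∧ d = dimAspec θ' E} := by
  set D := {d : ℝ | ∃ θ' : ℝ, 0 < θ' ∧ θ' < θ ∧ d = dimAspec θ' E}
  have hle : ∀ θ', 0 < θ' → θ' < θ → dimAspec θ' E ≤ dimAreg θ E := fun θ' h0 h1 =>
    dimAspec_le_dimAreg ⟨n + 1, _, by positivity, by positivity, hasRegSpecBound_euclidean E θ⟩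
      h0 h1.le hθ1
  have hne : D.Nonempty := ⟨_, θ / 2, by linarith, by linarith, rfl⟩
  have hbdd : BddAbove D := ⟨dimAreg θ E, by rintro _ ⟨θ', h0, h1, rfl⟩; exact hle θ' h0 h1⟩
  refine le_antisymm (dimAreg_le_of_forall_dimAspec_le hθ0 hθ1 fun θ' h0 h1 => ?_) ?_
  · exact le_csSup hbdd ⟨θ', h0, h1, rfl⟩
  · exact csSup_le hne (by rintro _ ⟨θ', h0, h1, rfl⟩; exact hle θ' h0 h1)
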